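/- arXiv:1905.03038 — 2 statements merged into one kernel-verified Lean document; each statement's English description precedes it below -/
import Mathlib

section
/- For any cycle C with at most 8 vertices (goods) and any three agents with additive nonnegative utility functions, there is a partition of the vertices of C into three bundles, each inducing a connected subgraph (path) of C, such that each agent i receives a bundle of value at least mms^(3)(C,u_i) to her. -/
open scoped BigOperators
set_option linter.unusedSectionVars false

noncomputable section

def bval {V : Type*} [DecidableEq V] (u : V → ℝ) (S : Finset V) : ℝ := ∑ v ∈ S, u v

def IsBundle {V : Type*} (G : SimpleGraph V) (S : Finset V) : Prop :=
  (S : Set V) = ∅ ∨ (G.induce (S : Set V)).Connected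

def IsSplitOn {V : Type*} [DecidableEq V] (G : SimpleGraph V) (A : Finset V) (n : ℕ)
    (P : Fin n → Finset V) : Prop :=
  (∀ i, IsBundle G (P i)) ∧ (∀ i j, i ≠ j → Disjoint (P i) (P j)) ∧
  (∀ i, P i ⊆ A) ∧ (∀ v ∈ A, ∃ i, v ∈ P i)

def mmsOn {V : Type*} [DecidableEq V] (G : SimpleGraph V) (A : Finset V)
    (n : ℕ) (u : V → ℝ) : ℝ :=
  sSup {q : ℝ | ∃ P : Fin n → Finset V, IsSplitOn G A n P ∧ ∀ i, q ≤ bval u (P i)}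

def mms {V : Type*} [DecidableEq V] [Fintype V] (G : SimpleGraph V)
    (n : ℕ) (u : V → ℝ) : ℝ := mmsOn G Finset.univ n u

def cycleGraph (m : ℕ) : SimpleGraph (ZMod m) :=
  SimpleGraph.fromRel (fun v w => w = v + 1)

end

noncomputable section Helpers

/-- the arc of the cycle corresponding to path positions `[p, q)`, starting at `z`. -/
def arcP (m : ℕ) (z : ZMod m) (p q : ℕ) : Finset (ZMod m) :=
  (Finset.Ico p q).image (fun t : ℕ => z + (t : ZMod m))

/-- interval value of a function on `[p,q)`. -/
def seg (F : ℕ → ℝ) (p q : ℕ) : ℝ := ∑ t ∈ Finset.Ico p q, F t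

variable {m : ℕ} [NeZero m]

lemma zmod_cast_inj {a b : ℕ} (ha : a < m) (hb : b < m) (h : (a : ZMod m) = b) : a = b := by
  have := congrArg ZMod.val h
  rwa [ZMod.val_cast_of_lt ha, ZMod.val_cast_of_lt hb] at this

lemma mem_arcP {z : ZMod m} {p q : ℕ} {x : ZMod m} :
    x ∈ arcP m z p q ↔ ∃ t, p ≤ t ∧ t < q ∧ x = z + (t : ZMod m) := by
  simp only [arcP, Finset.mem_image, Finset.mem_Ico]
  constructor
  · rintro ⟨t, ⟨h1, h2⟩, rfl⟩; exact ⟨t, h1, h2, rfl⟩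
  · rintro ⟨t, h1, h2, rfl⟩; exact ⟨t, ⟨h1, h2⟩, rfl⟩

lemma arcP_full (z : ZMod m) : arcP m z 0 m = Finset.univ := by
  ext x
  simp only [Finset.mem_univ, iff_true, mem_arcP]
  refine ⟨(x - z).val, Nat.zero_le _, ZMod.val_lt _, ?_⟩
  rw [ZMod.natCast_rightInverse (x - z)]; ring

lemma sum_arcP (u : ZMod m → ℝ) (z : ZMod m) {p q : ℕ} (hq : q ≤ m) :
    bval u (arcP m z p q) = ∑ t ∈ Finset.Ico p q, u (z + (t : ZMod m)) := by
  unfold bval arcP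
  refine Finset.sum_image (fun a ha b hb hab => ?_)
  have ha' : a < m := lt_of_lt_of_le (Finset.mem_Ico.mp ha).2 hq
  have hb' : b < m := lt_of_lt_of_le (Finset.mem_Ico.mp hb).2 hq
  exact zmod_cast_inj ha' hb' (by
    have := hab
    exact add_left_cancel this)

lemma arcP_disjoint (z : ZMod m) {p q p' q' : ℕ} (hq : q ≤ m) (hq' : q' ≤ m)
    (h : q ≤ p' ∨ q' ≤ p) : Disjoint (arcP m z p q) (arcP m z p' q') := by
  rw [Finset.disjoint_left]
  intro x hx hx'
  obtain ⟨t, ht1, ht2, rfl⟩ := mem_arcP.mp hx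
  obtain ⟨t', ht1', ht2', he⟩ := mem_arcP.mp hx'
  have : t = t' := zmod_cast_inj (lt_of_lt_of_le ht2 hq) (lt_of_lt_of_le ht2' hq')
    (add_left_cancel he)
  omega

lemma arcP_shift (z : ZMod m) (p L : ℕ) : arcP m (z + (p : ZMod m)) 0 L = arcP m z p (p + L) := by
  ext x
  simp only [mem_arcP]
  constructor
  · rintro ⟨t, -, ht, rfl⟩
    exact ⟨p + t, Nat.le_add_right _ _, by omega, by push_cast; ring⟩
  · rintro ⟨t, h1, h2, rfl⟩
    refine ⟨t - p, Nat.zero_le _, by omega, ?_⟩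
    have : (t : ZMod m) = (p : ZMod m) + ((t - p : ℕ) : ZMod m) := by
      rw [← Nat.cast_add]; congr 1; omega
    rw [this]; ring

lemma card_arcP (z : ZMod m) {p q : ℕ} (hq : q ≤ m) : (arcP m z p q).card = q - p := by
  unfold arcP
  rw [Finset.card_image_of_injOn, Nat.card_Ico]
  intro a ha b hb hab
  exact zmod_cast_inj (lt_of_lt_of_le (Finset.mem_Ico.mp ha).2 hq)
    (lt_of_lt_of_le (Finset.mem_Ico.mp hb).2 hq) (add_left_cancel hab)

lemma cyc_adj {x y : ZMod m} : (cycleGraph m).Adj x y ↔ x ≠ y ∧ (y = x + 1 ∨ x = y + 1) :=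
  SimpleGraph.fromRel_adj _ x y

lemma cyc_adj_succ (hm : 3 ≤ m) (x : ZMod m) : (cycleGraph m).Adj x (x + 1) := by
  haveI : Fact (1 < m) := ⟨by omega⟩
  rw [cyc_adj]
  refine ⟨fun h => ?_, Or.inl rfl⟩
  have : (0 : ZMod m) = 1 := by
    have := h; nth_rewrite 1 [← add_zero x] at this
    exact add_left_cancel this
  exact one_ne_zero this.symm

lemma arcP_bundle (hm : 3 ≤ m) (z : ZMod m) {p q : ℕ} (hq : q ≤ m) :
    IsBundle (cycleGraph m) (arcP m z p q) := by
  rcases le_or_gt q p with h | hpq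
  · left
    have : arcP m z p q = ∅ := by
      unfold arcP
      rw [Finset.Ico_eq_empty (by omega), Finset.image_empty]
    simp [this]
  · right
    set S := arcP m z p q with hS
    have hbase : z + (p : ZMod m) ∈ S := mem_arcP.mpr ⟨p, le_refl _, hpq, rfl⟩
    rw [SimpleGraph.connected_iff]
    refine ⟨?_, ⟨⟨_, hbase⟩⟩⟩
    -- preconnected
    have key : ∀ t (h1 : p ≤ t) (h2 : t < q),
        ((cycleGraph m).induce (S : Set (ZMod m))).Reachable ⟨z + (p : ZMod m), hbase⟩
          ⟨z + (t : ZMod m), mem_arcP.mpr ⟨t, h1, h2, rfl⟩⟩ := by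
      intro t
      induction t with
      | zero =>
        intro h1 h2
        have hp0 : p = 0 := by omega
        subst hp0
        exact SimpleGraph.Reachable.refl _
      | succ t ih =>
        intro h1 h2
        rcases le_or_gt p t with h | h
        · have step : ((cycleGraph m).induce (S : Set (ZMod m))).Adj
              ⟨z + (t : ZMod m), mem_arcP.mpr ⟨t, by omega, by omega, rfl⟩⟩
              ⟨z + ((t+1 : ℕ) : ZMod m), mem_arcP.mpr ⟨t+1, by omega, by omega, rfl⟩⟩ := by
            have : (((t+1 : ℕ)) : ZMod m) = (t : ZMod m) + 1 := by push_cast; ring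
            simp only [SimpleGraph.comap_adj, Function.Embedding.coe_subtype]
            rw [this, ← add_assoc]
            exact cyc_adj_succ hm _
          exact (ih h (by omega)).trans step.reachable
        · have hp : p = t + 1 := by omega
          subst hp
          exact SimpleGraph.Reachable.refl _
    intro x y
    obtain ⟨tx, h1x, h2x, hx⟩ := mem_arcP.mp x.2
    obtain ⟨ty, h1y, h2y, hy⟩ := mem_arcP.mp y.2
    have rx := key tx h1x h2x
    have ry := key ty h1y h2y
    have ex : x = ⟨z + (tx : ZMod m), mem_arcP.mpr ⟨tx, by omega, by omega, rfl⟩⟩ :=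
      Subtype.ext hx
    have ey : y = ⟨z + (ty : ZMod m), mem_arcP.mpr ⟨ty, by omega, by omega, rfl⟩⟩ :=
      Subtype.ext hy
    rw [ex, ey]
    exact rx.symm.trans ry

end Helpers
section Part2
variable {m : ℕ} [NeZero m]

def loF (p q : ℕ) : Fin 3 → ℕ := ![0, p, q]
def hiF (p q mm : ℕ) : Fin 3 → ℕ := ![p, q, mm]

lemma arcP_split (hm : 3 ≤ m) (z : ZMod m) {p q : ℕ} (hpq : p ≤ q) (hqm : q ≤ m) :
    IsSplitOn (cycleGraph m) Finset.univ 3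
      (fun s => arcP m z (loF p q s) (hiF p q m s)) := by
  have hlo : ∀ s : Fin 3, hiF p q m s ≤ m := by
    intro s; fin_cases s <;> simp [hiF] <;> omega
  refine ⟨?_, ?_, fun i => Finset.subset_univ _, ?_⟩
  · intro i; exact arcP_bundle hm z (hlo i)
  · have d01 : Disjoint (arcP m z 0 p) (arcP m z p q) :=
      arcP_disjoint z (le_trans hpq hqm) hqm (Or.inl le_rfl)
    have d02 : Disjoint (arcP m z 0 p) (arcP m z q m) :=
      arcP_disjoint z (le_trans hpq hqm) le_rfl (Or.inl hpq)
    have d12 : Disjoint (arcP m z p q) (arcP m z q m) :=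
      arcP_disjoint z hqm le_rfl (Or.inl le_rfl)
    intro i j hij
    fin_cases i <;> fin_cases j <;>
      first
        | exact absurd rfl hij
        | exact d01 | exact d02 | exact d12
        | exact d01.symm | exact d02.symm | exact d12.symm
  · intro v _
    set t := (v - z).val with ht
    have htm : t < m := ZMod.val_lt _
    have hv : v = z + (t : ZMod m) := by
      rw [ht, ZMod.natCast_rightInverse (v - z)]; ring
    rcases lt_or_ge t p with h | h
    · exact ⟨0, mem_arcP.mpr ⟨t, by simp [loF], by simpa [hiF], hv⟩⟩
    · rcases lt_or_ge t q with h2 | h2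
      · exact ⟨1, mem_arcP.mpr ⟨t, by simpa [loF], by simpa [hiF], hv⟩⟩
      · exact ⟨2, mem_arcP.mpr ⟨t, by simpa [loF], by simpa [hiF], hv⟩⟩

lemma split_perm {V : Type*} [DecidableEq V] {G : SimpleGraph V} {A : Finset V}
    {P : Fin 3 → Finset V} (h : IsSplitOn G A 3 P) (e : Fin 3 → Fin 3)
    (he : Function.Bijective e) : IsSplitOn G A 3 (P ∘ e) := by
  obtain ⟨h1, h2, h3, h4⟩ := h
  refine ⟨fun i => h1 _, fun i j hij => h2 _ _ (fun hc => hij (he.1 hc)), fun i => h3 _, ?_⟩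
  intro v hv
  obtain ⟨i, hi⟩ := h4 v hv
  obtain ⟨i', rfl⟩ := he.2 i
  exact ⟨i', hi⟩

lemma sum_split {u : ZMod m → ℝ} {P : Fin 3 → Finset (ZMod m)}
    (h : IsSplitOn (cycleGraph m) Finset.univ 3 P) :
    bval u (P 0) + bval u (P 1) + bval u (P 2) = bval u Finset.univ := by
  obtain ⟨-, h2, -, h4⟩ := h
  have hu : Finset.univ = P 0 ∪ P 1 ∪ P 2 := by
    ext v
    simp only [Finset.mem_univ, true_iff, Finset.mem_union]
    obtain ⟨i, hi⟩ := h4 v (Finset.mem_univ v)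
    fin_cases i
    · exact Or.inl (Or.inl hi)
    · exact Or.inl (Or.inr hi)
    · exact Or.inr hi
  have d01 : Disjoint (P 0) (P 1) := h2 0 1 (by decide)
  have d02 : Disjoint (P 0 ∪ P 1) (P 2) :=
    Finset.disjoint_union_left.mpr ⟨h2 0 2 (by decide), h2 1 2 (by decide)⟩
  rw [hu]
  unfold bval
  rw [Finset.sum_union d02, Finset.sum_union d01]

lemma bval_nonneg {u : ZMod m → ℝ} (hu : ∀ v, 0 ≤ u v) (S : Finset (ZMod m)) :
    0 ≤ bval u S := Finset.sum_nonneg (fun v _ => hu v)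

/-- the mms value is attained by some split. -/
lemma mms_attained (hm : 3 ≤ m) (u : ZMod m → ℝ) :
    ∃ P : Fin 3 → Finset (ZMod m), IsSplitOn (cycleGraph m) Finset.univ 3 P ∧
      ∀ i, mms (cycleGraph m) 3 u ≤ bval u (P i) := by
  classical
  set G := cycleGraph m
  let f : (Fin 3 → Finset (ZMod m)) → ℝ :=
    fun P => min (bval u (P 0)) (min (bval u (P 1)) (bval u (P 2)))
  have hf : ∀ P, ∀ i : Fin 3, f P ≤ bval u (P i) := by
    intro P i
    fin_cases i
    · exact min_le_left _ _
    · exact (min_le_right _ _).trans (min_le_left _ _)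
    · exact (min_le_right _ _).trans (min_le_right _ _)
  let F : Finset (Fin 3 → Finset (ZMod m)) :=
    Finset.univ.filter (fun P => IsSplitOn G Finset.univ 3 P)
  have hF0 : (fun s => arcP m 0 (loF 1 2 s) (hiF 1 2 m s)) ∈ F := by
    simp only [F, Finset.mem_filter, Finset.mem_univ, true_and]
    exact arcP_split hm 0 (by omega) (by omega)
  obtain ⟨Pm, hPmF, hPmmax⟩ := F.exists_max_image f ⟨_, hF0⟩
  have hPmsplit : IsSplitOn G Finset.univ 3 Pm := by
    simpa [F] using hPmF
  have hgr : IsGreatest {q : ℝ | ∃ P, IsSplitOn G Finset.univ 3 P ∧ ∀ i, q ≤ bval u (P i)}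
      (f Pm) := by
    constructor
    · exact ⟨Pm, hPmsplit, hf Pm⟩
    · rintro q ⟨P, hP, hq⟩
      have : q ≤ f P := le_min (hq 0) (le_min (hq 1) (hq 2))
      exact this.trans (hPmmax P (by simp [F, hP]))
  have : mms G 3 u = f Pm := hgr.csSup_eq
  exact ⟨Pm, hPmsplit, fun i => this ▸ hf Pm i⟩

end Part2
section Part3
variable {m : ℕ} [NeZero m]

/-- position of `x` relative to origin `v+1`. -/
private def gpos (v x : ZMod m) : ℕ := (x - (v + 1)).val

lemma gpos_lt (v x : ZMod m) : gpos v x < m := ZMod.val_lt _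

lemma gpos_eq_iff {v x : ZMod m} {t : ℕ} (ht : t < m) :
    gpos v x = t ↔ x = v + 1 + (t : ZMod m) := by
  constructor
  · intro h
    have : ((gpos v x : ℕ) : ZMod m) = x - (v + 1) := ZMod.natCast_rightInverse _
    rw [h] at this
    rw [this]; ring
  · intro h
    subst h
    unfold gpos
    rw [show v + 1 + (t : ZMod m) - (v + 1) = (t : ZMod m) by ring]
    exact ZMod.val_cast_of_lt ht

lemma gpos_lt_of_ne {v x : ZMod m} (hm : 3 ≤ m) (h : x ≠ v) : gpos v x < m - 1 := by
  have h1 : gpos v x < m := gpos_lt v x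
  rcases Nat.lt_or_ge (gpos v x) (m - 1) with h2 | h2
  · exact h2
  · exfalso
    have : gpos v x = m - 1 := by omega
    rw [gpos_eq_iff (by omega)] at this
    apply h
    rw [this]
    have key : ((m - 1 : ℕ) : ZMod m) = -1 := by
      have h2 : (m - 1) + 1 = m := by omega
      have h3 : (((m - 1) + 1 : ℕ) : ZMod m) = 0 := by rw [h2]; exact ZMod.natCast_self m
      push_cast at h3
      linear_combination h3
    rw [key]; ring

lemma gpos_succ {v x : ZMod m} (hm : 3 ≤ m) (hx : x ≠ v) :
    gpos v (x + 1) = gpos v x + 1 := by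
  have h1 : gpos v x < m - 1 := gpos_lt_of_ne hm hx
  set n := gpos v x with hn
  have hxe : x = v + 1 + (n : ZMod m) := (gpos_eq_iff (by omega)).mp hn.symm
  rw [gpos_eq_iff (by omega), hxe]
  push_cast
  ring

/-- every connected nonempty proper subset of the cycle is an arc. -/
lemma connected_is_arc (hm : 3 ≤ m) {S : Finset (ZMod m)} (hne : S.Nonempty)
    (hconn : ((cycleGraph m).induce (S : Set (ZMod m))).Connected)
    {v : ZMod m} (hv : v ∉ S) :
    ∃ (w : ZMod m) (L : ℕ), 1 ≤ L ∧ L < m ∧ S = arcP m w 0 L := by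
  classical
  -- walk lemma
  have hSv : ∀ x ∈ S, x ≠ v := fun x hx he => hv (he ▸ hx)
  have step : ∀ x y : ZMod m, x ∈ S → y ∈ S → (cycleGraph m).Adj x y →
      gpos v y = gpos v x + 1 ∨ gpos v x = gpos v y + 1 := by
    intro x y hx hy hadj
    rw [cyc_adj] at hadj
    rcases hadj.2 with h | h
    · left; rw [h]; exact gpos_succ hm (hSv x hx)
    · right; rw [h]; exact gpos_succ hm (hSv y hy)
  have walkLem : ∀ (s t : (S : Set (ZMod m)))
      (w : ((cycleGraph m).induce (S : Set (ZMod m))).Walk s t) (n : ℕ),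
      gpos v s.1 ≤ n → n ≤ gpos v t.1 → ∃ x ∈ S, gpos v x = n := by
    intro s t w
    induction w with
    | @nil u =>
      intro n h1 h2
      exact ⟨u.1, u.2, by omega⟩
    | @cons a b c hadj w ih =>
      intro n h1 h2
      have hadj' : (cycleGraph m).Adj a.1 b.1 := by simpa using hadj
      have hs := step a.1 b.1 a.2 b.2 hadj'
      rcases Nat.eq_or_lt_of_le h1 with he | hlt
      · exact ⟨a.1, a.2, he⟩

      · refine ih n ?_ h2
        rcases hs with h | h <;> omega
  -- image of gpos
  set T : Finset ℕ := S.image (gpos v) with hT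
  have hTne : T.Nonempty := hne.image _
  set ta := T.min' hTne with hta
  set tb := T.max' hTne with htb
  obtain ⟨xa, hxa, hxae⟩ := Finset.mem_image.mp (T.min'_mem hTne)
  obtain ⟨xb, hxb, hxbe⟩ := Finset.mem_image.mp (T.max'_mem hTne)
  have hreach := hconn.preconnected ⟨xa, hxa⟩ ⟨xb, hxb⟩
  obtain ⟨wk⟩ := hreach
  have hTicc : ∀ n, ta ≤ n → n ≤ tb → n ∈ T := by
    intro n h1 h2
    obtain ⟨x, hx, hgx⟩ := walkLem _ _ wk n (by rw [hxae]; exact h1) (by rw [hxbe]; exact h2)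
    exact Finset.mem_image.mpr ⟨x, hx, hgx⟩
  have htab : ta ≤ tb := Finset.min'_le _ _ (T.max'_mem hTne)
  have htbm : tb < m - 1 := by
    rw [htb, ← hxbe]; exact gpos_lt_of_ne hm (hSv xb hxb)
  refine ⟨v + 1 + (ta : ZMod m), tb + 1 - ta, by omega, by omega, ?_⟩
  ext x
  rw [mem_arcP]
  constructor
  · intro hx
    have hgx : gpos v x ∈ T := Finset.mem_image.mpr ⟨x, hx, rfl⟩
    have h1 : ta ≤ gpos v x := Finset.min'_le _ _ hgx
    have h2 : gpos v x ≤ tb := Finset.le_max' _ _ hgx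
    refine ⟨gpos v x - ta, Nat.zero_le _, by omega, ?_⟩
    set n := gpos v x with hn
    have hxe : x = v + 1 + (n : ZMod m) := (gpos_eq_iff (gpos_lt v x)).mp hn.symm
    have hsplit : (n : ZMod m) = (ta : ZMod m) + ((n - ta : ℕ) : ZMod m) := by
      rw [← Nat.cast_add]; congr 1; omega
    rw [hxe, hsplit]; ring
  · rintro ⟨t, -, htL, rfl⟩
    have htm : ta + t < m := by omega
    have hg : gpos v (v + 1 + (ta : ZMod m) + (t : ZMod m)) = ta + t := by
      rw [gpos_eq_iff htm, add_assoc, Nat.cast_add]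
    have : ta + t ∈ T := hTicc _ (by omega) (by omega)
    obtain ⟨x', hx', hgx'⟩ := Finset.mem_image.mp this
    have hx'e : x' = v + 1 + ((ta + t : ℕ) : ZMod m) := (gpos_eq_iff htm).mp hgx'
    rw [hx'e] at hx'
    rw [add_assoc, ← Nat.cast_add]
    exact hx'

end Part3
section Part4
variable {m : ℕ} [NeZero m]

open Classical in
noncomputable def cutF (P : Fin 3 → Finset (ZMod m)) : Finset (ZMod m) :=
  Finset.univ.filter (fun z => ∃ i, z ∈ P i ∧ z - 1 ∉ P i)

lemma mem_cutF {P : Fin 3 → Finset (ZMod m)} {z : ZMod m} :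
    z ∈ cutF P ↔ ∃ i, z ∈ P i ∧ z - 1 ∉ P i := by
  classical
  simp [cutF]

lemma pred_closed {S : Finset (ZMod m)} (h : ∀ z ∈ S, z - 1 ∈ S) {z0 : ZMod m}
    (hz : z0 ∈ S) (w : ZMod m) : w ∈ S := by
  have key : ∀ k : ℕ, z0 - (k : ZMod m) ∈ S := by
    intro k
    induction k with
    | zero => simpa using hz
    | succ k ih =>
      have h2 := h _ ih
      have he : z0 - ((k : ℕ) : ZMod m) - 1 = z0 - (((k+1 : ℕ)) : ZMod m) := by
        push_cast; ring
      rwa [he] at h2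
  have hw : w = z0 - (((z0 - w).val : ℕ) : ZMod m) := by
    rw [ZMod.natCast_rightInverse (z0 - w)]; ring
  rw [hw]; exact key _

lemma other_index (i : Fin 3) : ∃ j : Fin 3, j ≠ i := by
  by_cases h0 : i = 0
  · exact ⟨1, by rw [h0]; decide⟩
  · exact ⟨0, fun h => h0 h.symm⟩

lemma exists_start {P : Fin 3 → Finset (ZMod m)}
    (hsp : IsSplitOn (cycleGraph m) Finset.univ 3 P) (hne : ∀ i, (P i).Nonempty)
    (i : Fin 3) : ∃ z, z ∈ P i ∧ z - 1 ∉ P i := by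
  by_contra hc
  push_neg at hc
  obtain ⟨z0, hz0⟩ := hne i
  obtain ⟨j, hj⟩ := other_index i
  obtain ⟨x, hx⟩ := hne j
  have hxPi : x ∈ P i := pred_closed hc hz0 x
  exact Finset.disjoint_left.mp (hsp.2.1 i j (fun h => hj h.symm)) hxPi hx

lemma card_cutF {P : Fin 3 → Finset (ZMod m)}
    (hsp : IsSplitOn (cycleGraph m) Finset.univ 3 P) (hne : ∀ i, (P i).Nonempty) :
    3 ≤ (cutF P).card := by
  classical
  obtain ⟨z0, hz00, hz01⟩ := exists_start hsp hne 0
  obtain ⟨z1, hz10, hz11⟩ := exists_start hsp hne 1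
  obtain ⟨z2, hz20, hz21⟩ := exists_start hsp hne 2
  have hd : ∀ (i j : Fin 3) (x y : ZMod m), i ≠ j → x ∈ P i → y ∈ P j → x ≠ y := by
    intro i j x y hij hx hy he
    exact Finset.disjoint_left.mp (hsp.2.1 i j hij) hx (he ▸ hy)
  have h01 : z0 ≠ z1 := hd 0 1 _ _ (by decide) hz00 hz10
  have h02 : z0 ≠ z2 := hd 0 2 _ _ (by decide) hz00 hz20
  have h12 : z1 ≠ z2 := hd 1 2 _ _ (by decide) hz10 hz20
  have hsub : ({z0, z1, z2} : Finset (ZMod m)) ⊆ cutF P := by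
    intro x hx
    simp only [Finset.mem_insert, Finset.mem_singleton] at hx
    rcases hx with rfl | rfl | rfl
    · exact mem_cutF.mpr ⟨0, hz00, hz01⟩
    · exact mem_cutF.mpr ⟨1, hz10, hz11⟩
    · exact mem_cutF.mpr ⟨2, hz20, hz21⟩
  have hcard : ({z0, z1, z2} : Finset (ZMod m)).card = 3 := by
    rw [Finset.card_insert_of_notMem (by simp [h01, h02]),
        Finset.card_insert_of_notMem (by simp [h12]), Finset.card_singleton]
  rw [← hcard]
  exact Finset.card_le_card hsub

lemma arc_first {w y : ZMod m} {L : ℕ} (hL : L ≤ m) (hy : y ∈ arcP m w 0 L)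
    (hy1 : y - 1 ∉ arcP m w 0 L) : y = w := by
  obtain ⟨t, -, htL, rfl⟩ := mem_arcP.mp hy
  rcases Nat.eq_zero_or_pos t with rfl | ht
  · simp
  · exfalso
    apply hy1
    obtain ⟨s, rfl⟩ : ∃ s, t = s + 1 := ⟨t - 1, by omega⟩
    refine mem_arcP.mpr ⟨s, Nat.zero_le _, by omega, ?_⟩
    have he : (((s + 1 : ℕ)) : ZMod m) = ((s : ℕ) : ZMod m) + 1 := by push_cast; ring
    rw [he]; ring

/-- structure of an all-nonempty split relative to a cut point `z`:
it consists of the three arcs `[z, z+x1), [z+x1, z+x2), [z+x2, z+m)`. -/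
lemma active_structure (hm3 : 3 ≤ m) {P : Fin 3 → Finset (ZMod m)}
    (hsp : IsSplitOn (cycleGraph m) Finset.univ 3 P)
    (hne : ∀ i, (P i).Nonempty) {z : ZMod m} (hz : z ∈ cutF P) :
    ∃ x1 x2 : ℕ, 0 < x1 ∧ x1 < x2 ∧ x2 < m ∧
      ∀ s : Fin 3, ∃ j, P j = arcP m z (loF x1 x2 s) (hiF x1 x2 m s) := by
  classical
  obtain ⟨i0, hzi0, hzpred⟩ := mem_cutF.mp hz
  -- each bundle is an arc
  have harc : ∀ i, ∃ (w : ZMod m) (L : ℕ), 1 ≤ L ∧ L < m ∧ P i = arcP m w 0 L := by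
    intro i
    obtain ⟨j, hj⟩ := other_index i
    obtain ⟨x, hx⟩ := hne j
    have hv : x ∉ P i :=
      fun hxi => Finset.disjoint_left.mp (hsp.2.1 i j (fun h => hj h.symm)) hxi hx
    have hb := hsp.1 i
    rcases hb with hb | hb
    · exfalso
      obtain ⟨y, hy⟩ := hne i
      rw [Finset.coe_eq_empty] at hb
      rw [hb] at hy
      exact absurd hy (Finset.notMem_empty y)
    · exact connected_is_arc hm3 (hne i) hb hv
  choose w L hL1 hLm harcs using harc
  have hd : ∀ (i j : Fin 3), i ≠ j → Disjoint (P i) (P j) := hsp.2.1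
  -- z is the start of its arc
  have hwz : w i0 = z := by
    have := arc_first (le_of_lt (hLm i0)) (harcs i0 ▸ hzi0) (fun hc => hzpred (harcs i0 ▸ hc))
    exact this.symm
  set x1 := L i0 with hx1def
  -- the next arc
  have hnext_notin : z + (x1 : ZMod m) ∉ P i0 := by
    rw [harcs i0, hwz]
    intro hc
    obtain ⟨t, -, htL, he⟩ := mem_arcP.mp hc
    have : x1 = t := zmod_cast_inj (hLm i0) (lt_trans htL (hLm i0)) (add_left_cancel he)
    omega
  obtain ⟨i1, hi1⟩ := hsp.2.2.2 (z + (x1 : ZMod m)) (Finset.mem_univ _)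
  have hi1ne : i1 ≠ i0 := fun h => hnext_notin (h ▸ hi1)
  have hzx1pred : z + (x1 : ZMod m) - 1 ∈ P i0 := by
    rw [harcs i0, hwz]
    obtain ⟨s, hs⟩ : ∃ s, x1 = s + 1 := ⟨x1 - 1, by have := hL1 i0; omega⟩
    refine mem_arcP.mpr ⟨s, Nat.zero_le _, by omega, ?_⟩
    have he : ((x1 : ℕ) : ZMod m) = ((s : ℕ) : ZMod m) + 1 := by rw [hs]; push_cast; ring
    rw [he]; ring
  have hw1 : w i1 = z + (x1 : ZMod m) := by
    have hnp : z + (x1 : ZMod m) - 1 ∉ P i1 :=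
      fun hc => Finset.disjoint_left.mp (hd i0 i1 (fun h => hi1ne h.symm)) hzx1pred hc
    exact (arc_first (le_of_lt (hLm i1)) (harcs i1 ▸ hi1) (fun hc => hnp (harcs i1 ▸ hc))).symm
  -- third index
  have hthird : ∀ (a b c d : Fin 3), a ≠ b → c ≠ a → c ≠ b → d = a ∨ d = b ∨ d = c := by decide
  obtain ⟨i2, hi20, hi21⟩ : ∃ c : Fin 3, c ≠ i0 ∧ c ≠ i1 := by
    have : ∀ (a b : Fin 3), a ≠ b → ∃ c, c ≠ a ∧ c ≠ b := by decide
    exact this i0 i1 (fun h => hi1ne h.symm)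
  -- cards
  have hcards : L i0 + L i1 + L i2 = m := by
    have huniv : Finset.univ = P i0 ∪ P i1 ∪ P i2 := by
      ext v
      simp only [Finset.mem_univ, true_iff, Finset.mem_union]
      obtain ⟨i, hi⟩ := hsp.2.2.2 v (Finset.mem_univ v)
      rcases hthird i0 i1 i2 i (fun h => hi1ne h.symm) hi20 hi21 with rfl | rfl | rfl
      · exact Or.inl (Or.inl hi)
      · exact Or.inl (Or.inr hi)
      · exact Or.inr hi
    have hc := congrArg Finset.card huniv
    rw [Finset.card_univ, ZMod.card,
      Finset.card_union_of_disjoint (Finset.disjoint_union_left.mpr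
        ⟨hd i0 i2 (fun h => hi20 h.symm), hd i1 i2 (fun h => hi21 h.symm)⟩),
      Finset.card_union_of_disjoint (hd i0 i1 (fun h => hi1ne h.symm))] at hc
    have e0 : (P i0).card = L i0 := by rw [harcs i0, card_arcP _ (le_of_lt (hLm i0))]; omega
    have e1 : (P i1).card = L i1 := by rw [harcs i1, card_arcP _ (le_of_lt (hLm i1))]; omega
    have e2 : (P i2).card = L i2 := by rw [harcs i2, card_arcP _ (le_of_lt (hLm i2))]; omega
    omega
  set x2 := x1 + L i1 with hx2def
  have hx2m : x2 < m := by have := hL1 i2; omega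
  -- z + x2 is in P i2 and is its start
  have hnotin0 : z + (x2 : ZMod m) ∉ P i0 := by
    rw [harcs i0, hwz]
    intro hc
    obtain ⟨t, -, htL, he⟩ := mem_arcP.mp hc
    have : x2 = t := zmod_cast_inj hx2m (lt_trans htL (hLm i0)) (add_left_cancel he)
    omega
  have hnotin1 : z + (x2 : ZMod m) ∉ P i1 := by
    rw [harcs i1, hw1]
    intro hc
    obtain ⟨t, -, htL, he⟩ := mem_arcP.mp hc
    have he2 : ((x2 : ℕ) : ZMod m) = ((x1 + t : ℕ) : ZMod m) := by
      push_cast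
      push_cast at he
      linear_combination he
    have : x2 = x1 + t := zmod_cast_inj hx2m (by omega) he2
    omega
  obtain ⟨i2', hi2'⟩ := hsp.2.2.2 (z + (x2 : ZMod m)) (Finset.mem_univ _)
  have hEq : i2' = i2 := by
    rcases hthird i0 i1 i2 i2' (fun h => hi1ne h.symm) hi20 hi21 with rfl | rfl | rfl
    · exact absurd hi2' hnotin0
    · exact absurd hi2' hnotin1
    · rfl
  rw [hEq] at hi2'
  have hzx2pred : z + (x2 : ZMod m) - 1 ∈ P i1 := by
    rw [harcs i1, hw1]
    obtain ⟨s, hs⟩ : ∃ s, L i1 = s + 1 := ⟨L i1 - 1, by have := hL1 i1; omega⟩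
    refine mem_arcP.mpr ⟨s, Nat.zero_le _, by omega, ?_⟩
    have he : ((x2 : ℕ) : ZMod m) = ((x1 : ℕ) : ZMod m) + ((s : ℕ) : ZMod m) + 1 := by
      rw [hx2def, hs]; push_cast; ring
    rw [he]; ring
  have hw2 : w i2 = z + (x2 : ZMod m) := by
    have hnp : z + (x2 : ZMod m) - 1 ∉ P i2 :=
      fun hc => Finset.disjoint_left.mp (hd i1 i2 (fun h => hi21 h.symm)) hzx2pred hc
    exact (arc_first (le_of_lt (hLm i2)) (harcs i2 ▸ hi2') (fun hc => hnp (harcs i2 ▸ hc))).symm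
  refine ⟨x1, x2, hL1 i0, by have := hL1 i1; omega, hx2m, ?_⟩
  intro s
  fin_cases s
  · exact ⟨i0, by rw [harcs i0, hwz]; rfl⟩
  · refine ⟨i1, ?_⟩
    rw [harcs i1, hw1, arcP_shift]
    rfl
  · refine ⟨i2, ?_⟩
    rw [harcs i2, hw2, arcP_shift]
    have : x2 + L i2 = m := by omega
    rw [this]
    rfl
end Part4
section Core

lemma loF_zero (p q : ℕ) : loF p q 0 = 0 := rfl
lemma loF_one (p q : ℕ) : loF p q 1 = p := rfl
lemma loF_two (p q : ℕ) : loF p q 2 = q := rfl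
lemma hiF_zero (p q mm : ℕ) : hiF p q mm 0 = p := rfl
lemma hiF_one (p q mm : ℕ) : hiF p q mm 1 = q := rfl
lemma hiF_two (p q mm : ℕ) : hiF p q mm 2 = mm := rfl

lemma seg_mono {F : ℕ → ℝ} (hF : ∀ t, 0 ≤ F t) {p q p' q' : ℕ} (h1 : p' ≤ p) (h2 : q ≤ q') :
    seg F p q ≤ seg F p' q' := by
  unfold seg
  apply Finset.sum_le_sum_of_subset_of_nonneg
  · exact Finset.Ico_subset_Ico h1 h2
  · exact fun t _ _ => hF t

lemma seg_split {F : ℕ → ℝ} {p q r : ℕ} (h1 : p ≤ q) (h2 : q ≤ r) :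
    seg F p q + seg F q r = seg F p r := Finset.sum_Ico_consecutive F h1 h2

/-- the core combinatorial lemma: two agents with aligned 3-interval partitions
of the path `[0,mm)` and a third agent with total value at least `3γ` can each
get their due from a single 3-interval partition. -/
lemma core_lemma {mm : ℕ} {Fa Fb Fc : ℕ → ℝ} (hFa : ∀ t, 0 ≤ Fa t) (hFb : ∀ t, 0 ≤ Fb t)
    {α β γ : ℝ} {x1 x2 y1 y2 : ℕ}
    (hx1 : 0 < x1) (hx12 : x1 < x2) (hx2 : x2 < mm)
    (hy1 : 0 < y1) (hy12 : y1 < y2) (hy2 : y2 < mm)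
    (ha1 : α ≤ seg Fa 0 x1) (ha2 : α ≤ seg Fa x1 x2) (ha3 : α ≤ seg Fa x2 mm)
    (hb1 : β ≤ seg Fb 0 y1) (hb2 : β ≤ seg Fb y1 y2) (hb3 : β ≤ seg Fb y2 mm)
    (hc : 3 * γ ≤ seg Fc 0 mm) :
    ∃ p q : ℕ, p ≤ q ∧ q ≤ mm ∧
      ∃ ja jb jc : Fin 3, ja ≠ jb ∧ ja ≠ jc ∧ jb ≠ jc ∧
        α ≤ seg Fa (loF p q ja) (hiF p q mm ja) ∧
        β ≤ seg Fb (loF p q jb) (hiF p q mm jb) ∧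
        γ ≤ seg Fc (loF p q jc) (hiF p q mm jc) := by
  have hcsplit : ∀ p q : ℕ, p ≤ q → q ≤ mm →
      γ ≤ seg Fc 0 p ∨ γ ≤ seg Fc p q ∨ γ ≤ seg Fc q mm := by
    intro p q h1 h2
    by_contra hcon
    push_neg at hcon
    obtain ⟨hc1, hc2, hc3⟩ := hcon
    have e1 : seg Fc 0 p + seg Fc p q = seg Fc 0 q := seg_split (Nat.zero_le _) h1
    have e2 : seg Fc 0 q + seg Fc q mm = seg Fc 0 mm := seg_split (by omega) h2
    linarith
  rcases le_or_gt x1 y1 with h1 | h1 <;> rcases le_or_gt x2 y2 with h2 | h2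
  · -- Case IV : x1 ≤ y1, x2 ≤ y2, cuts (x1, y2)
    refine ⟨x1, y2, by omega, by omega, ?_⟩
    rcases hcsplit x1 y2 (by omega) (by omega) with hg | hg | hg
    · refine ⟨1, 2, 0, by decide, by decide, by decide, ?_, ?_, ?_⟩ <;>
        simp only [loF_zero, loF_one, loF_two, hiF_zero, hiF_one, hiF_two]
      · exact le_trans ha2 (seg_mono hFa le_rfl (by omega))
      · exact hb3
      · exact hg
    · refine ⟨0, 2, 1, by decide, by decide, by decide, ?_, ?_, ?_⟩ <;>
        simp only [loF_zero, loF_one, loF_two, hiF_zero, hiF_one, hiF_two]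
      · exact ha1
      · exact hb3
      · exact hg
    · refine ⟨0, 1, 2, by decide, by decide, by decide, ?_, ?_, ?_⟩ <;>
        simp only [loF_zero, loF_one, loF_two, hiF_zero, hiF_one, hiF_two]
      · exact ha1
      · exact le_trans hb2 (seg_mono hFb h1 le_rfl)
      · exact hg
  · -- Case I : x1 ≤ y1, y2 < x2, cuts (y1, y2)
    refine ⟨y1, y2, by omega, by omega, ?_⟩
    rcases hcsplit y1 y2 (by omega) (by omega) with hg | hg | hg
    · refine ⟨2, 1, 0, by decide, by decide, by decide, ?_, ?_, ?_⟩ <;>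
        simp only [loF_zero, loF_one, loF_two, hiF_zero, hiF_one, hiF_two]
      · exact le_trans ha3 (seg_mono hFa (by omega) le_rfl)
      · exact hb2
      · exact hg
    · refine ⟨0, 2, 1, by decide, by decide, by decide, ?_, ?_, ?_⟩ <;>
        simp only [loF_zero, loF_one, loF_two, hiF_zero, hiF_one, hiF_two]
      · exact le_trans ha1 (seg_mono hFa le_rfl h1)
      · exact hb3
      · exact hg
    · refine ⟨0, 1, 2, by decide, by decide, by decide, ?_, ?_, ?_⟩ <;>
        simp only [loF_zero, loF_one, loF_two, hiF_zero, hiF_one, hiF_two]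
      · exact le_trans ha1 (seg_mono hFa le_rfl h1)
      · exact hb2
      · exact hg
  · -- Case II : y1 < x1, x2 ≤ y2, cuts (x1, x2)
    refine ⟨x1, x2, by omega, by omega, ?_⟩
    rcases hcsplit x1 x2 (by omega) (by omega) with hg | hg | hg
    · refine ⟨1, 2, 0, by decide, by decide, by decide, ?_, ?_, ?_⟩ <;>
        simp only [loF_zero, loF_one, loF_two, hiF_zero, hiF_one, hiF_two]
      · exact ha2
      · exact le_trans hb3 (seg_mono hFb (by omega) le_rfl)
      · exact hg
    · refine ⟨0, 2, 1, by decide, by decide, by decide, ?_, ?_, ?_⟩ <;>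
        simp only [loF_zero, loF_one, loF_two, hiF_zero, hiF_one, hiF_two]
      · exact ha1
      · exact le_trans hb3 (seg_mono hFb (by omega) le_rfl)
      · exact hg
    · refine ⟨1, 0, 2, by decide, by decide, by decide, ?_, ?_, ?_⟩ <;>
        simp only [loF_zero, loF_one, loF_two, hiF_zero, hiF_one, hiF_two]
      · exact ha2
      · exact le_trans hb1 (seg_mono hFb le_rfl (by omega))
      · exact hg
  · -- Case III : y1 < x1, y2 < x2, cuts (y1, x2)
    refine ⟨y1, x2, by omega, by omega, ?_⟩
    rcases hcsplit y1 x2 (by omega) (by omega) with hg | hg | hg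
    · refine ⟨2, 1, 0, by decide, by decide, by decide, ?_, ?_, ?_⟩ <;>
        simp only [loF_zero, loF_one, loF_two, hiF_zero, hiF_one, hiF_two]
      · exact ha3
      · exact le_trans hb2 (seg_mono hFb le_rfl (by omega))
      · exact hg
    · refine ⟨2, 0, 1, by decide, by decide, by decide, ?_, ?_, ?_⟩ <;>
        simp only [loF_zero, loF_one, loF_two, hiF_zero, hiF_one, hiF_two]
      · exact ha3
      · exact hb1
      · exact hg
    · refine ⟨1, 0, 2, by decide, by decide, by decide, ?_, ?_, ?_⟩ <;>
        simp only [loF_zero, loF_one, loF_two, hiF_zero, hiF_one, hiF_two]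
      · exact le_trans ha2 (seg_mono hFa (by omega) le_rfl)
      · exact hb1
      · exact hg

end Core
section Main

/-- for three agents and a cycle with at most 8 goods,
an mms-allocation always exists. -/
theorem stmt3 (m : ℕ) [NeZero m] (hm3 : 3 ≤ m) (hm8 : m ≤ 8)
    (us : Fin 3 → ZMod m → ℝ) (hus : ∀ i v, 0 ≤ us i v) :
    ∃ P : Fin 3 → Finset (ZMod m), IsSplitOn (cycleGraph m) Finset.univ 3 P ∧
      ∀ i, mms (cycleGraph m) 3 (us i) ≤ bval (us i) (P i) := by
  classical
  set μ : Fin 3 → ℝ := fun i => mms (cycleGraph m) 3 (us i) with hμ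
  have hatt : ∀ i : Fin 3, ∃ P, IsSplitOn (cycleGraph m) Finset.univ 3 P ∧
      ∀ s, μ i ≤ bval (us i) (P s) := fun i => mms_attained hm3 (us i)
  choose Q hQsplit hQval using hatt
  have hsum : ∀ i : Fin 3, 3 * μ i ≤ bval (us i) Finset.univ := by
    intro i
    have hs := sum_split (u := us i) (hQsplit i)
    have h0 := hQval i 0
    have h1 := hQval i 1
    have h2 := hQval i 2
    linarith
  have hcov3 : ∀ (a b c w : Fin 3), a ≠ b → a ≠ c → b ≠ c → w = a ∨ w = b ∨ w = c := by decide
  have hother : ∀ i : Fin 3, ∃ j k : Fin 3, i ≠ j ∧ i ≠ k ∧ j ≠ k := by decide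
  have hthird2 : ∀ i j : Fin 3, i ≠ j → ∃ k : Fin 3, k ≠ i ∧ k ≠ j := by decide
  by_cases htriv : ∃ i, μ i ≤ 0
  · -- some agent is trivial: divider / chooser
    obtain ⟨i, hi⟩ := htriv
    obtain ⟨j, k, hij, hik, hjk⟩ := hother i
    obtain ⟨t, -, ht⟩ := Finset.exists_max_image Finset.univ
      (fun s => bval (us k) (Q j s)) ⟨0, Finset.mem_univ 0⟩
    have hkval : μ k ≤ bval (us k) (Q j t) := by
      have hs := sum_split (u := us k) (hQsplit j)
      have h0 := ht 0 (Finset.mem_univ 0)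
      have h1 := ht 1 (Finset.mem_univ 1)
      have h2 := ht 2 (Finset.mem_univ 2)
      have h3 := hsum k
      linarith
    refine ⟨Q j ∘ (Equiv.swap k t), split_perm (hQsplit j) _ (Equiv.swap k t).bijective, ?_⟩
    intro w
    rcases hcov3 i j k w hij hik hjk with hw | hw | hw
    · rw [hw]
      exact le_trans hi (bval_nonneg (hus i) _)
    · rw [hw]
      exact hQval j _
    · rw [hw]
      simpa [Equiv.swap_apply_left] using hkval
  · -- all agents active
    push_neg at htriv
    have hne : ∀ i s, (Q i s).Nonempty := by
      intro i s
      rcases Finset.eq_empty_or_nonempty (Q i s) with he | h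
      · exfalso
        have hv := hQval i s
        rw [he] at hv
        simp only [bval, Finset.sum_empty] at hv
        exact absurd (lt_of_lt_of_le (htriv i) hv) (lt_irrefl 0)
      · exact h
    -- pigeonhole on cut points
    have hpair : ∃ i j : Fin 3, i ≠ j ∧ ∃ z, z ∈ cutF (Q i) ∧ z ∈ cutF (Q j) := by
      by_contra hcon
      push_neg at hcon
      have hdisj : ∀ i j : Fin 3, i ≠ j → Disjoint (cutF (Q i)) (cutF (Q j)) := by
        intro i j hij
        rw [Finset.disjoint_left]
        intro z hz1 hz2
        exact absurd hz2 (hcon i j hij z hz1)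
      have hcard : ∀ i, 3 ≤ (cutF (Q i)).card := fun i => card_cutF (hQsplit i) (hne i)
      have hle : (cutF (Q 0) ∪ cutF (Q 1) ∪ cutF (Q 2)).card ≤ m := by
        refine le_trans (Finset.card_le_univ _) ?_
        rw [ZMod.card]
      rw [Finset.card_union_of_disjoint (Finset.disjoint_union_left.mpr
            ⟨hdisj 0 2 (by decide), hdisj 1 2 (by decide)⟩),
          Finset.card_union_of_disjoint (hdisj 0 1 (by decide))] at hle
      have c0 := hcard 0; have c1 := hcard 1; have c2 := hcard 2
      omega
    obtain ⟨i, j, hij, z, hzi, hzj⟩ := hpair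
    obtain ⟨k, hki, hkj⟩ := hthird2 i j hij
    obtain ⟨x1, x2, hx1, hx12, hx2, hxs⟩ := active_structure hm3 (hQsplit i) (hne i) hzi
    obtain ⟨y1, y2, hy1, hy12, hy2, hys⟩ := active_structure hm3 (hQsplit j) (hne j) hzj
    have hfin3 : ∀ s : Fin 3, s = 0 ∨ s = 1 ∨ s = 2 := by decide
    have hhile : ∀ (a b : ℕ), a ≤ m → b ≤ m → ∀ s : Fin 3, hiF a b m s ≤ m := by
      intro a b h1 h2 s
      rcases hfin3 s with rfl | rfl | rfl
      · rw [hiF_zero]; exact h1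
      · rw [hiF_one]; exact h2
      · rw [hiF_two]
    have hkeyA : ∀ s : Fin 3,
        μ i ≤ seg (fun t => us i (z + (t : ZMod m))) (loF x1 x2 s) (hiF x1 x2 m s) := by
      intro s
      obtain ⟨jj, hjj⟩ := hxs s
      have hv := hQval i jj
      rw [hjj, sum_arcP (us i) z (hhile x1 x2 (by omega) (by omega) s)] at hv
      exact hv
    have hkeyB : ∀ s : Fin 3,
        μ j ≤ seg (fun t => us j (z + (t : ZMod m))) (loF y1 y2 s) (hiF y1 y2 m s) := by
      intro s
      obtain ⟨jj, hjj⟩ := hys s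
      have hv := hQval j jj
      rw [hjj, sum_arcP (us j) z (hhile y1 y2 (by omega) (by omega) s)] at hv
      exact hv
    have hkeyC : 3 * μ k ≤ seg (fun t => us k (z + (t : ZMod m))) 0 m := by
      have hv := hsum k
      rw [← arcP_full z, sum_arcP (us k) z le_rfl] at hv
      exact hv
    have hA1 := hkeyA 0; have hA2 := hkeyA 1; have hA3 := hkeyA 2
    have hB1 := hkeyB 0; have hB2 := hkeyB 1; have hB3 := hkeyB 2
    rw [loF_zero, hiF_zero] at hA1 hB1
    rw [loF_one, hiF_one] at hA2 hB2
    rw [loF_two, hiF_two] at hA3 hB3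
    obtain ⟨p, q, hpq, hqm, ja, jb, jc, hab, hac, hbc, hva, hvb, hvc⟩ :=
      core_lemma (fun t => hus i _) (fun t => hus j _) hx1 hx12 hx2 hy1 hy12 hy2
        hA1 hA2 hA3 hB1 hB2 hB3 hkeyC
    set τ : Fin 3 → Fin 3 := fun w => if w = i then ja else if w = j then jb else jc with hτ
    have tvi : τ i = ja := by simp [hτ]
    have tvj : τ j = jb := by simp [hτ, Ne.symm hij]
    have tvk : ∀ v : Fin 3, v ≠ i → v ≠ j → τ v = jc := by
      intro v h1 h2; simp [hτ, h1, h2]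
    have hwk : ∀ v : Fin 3, v ≠ i → v ≠ j → v = k := by
      intro v h1 h2
      rcases hcov3 i j k v hij (fun hh => hki hh.symm) (fun hh => hkj hh.symm) with h | h | h
      · exact absurd h h1
      · exact absurd h h2
      · exact h
    have hτinj : Function.Injective τ := by
      intro w w' h
      have e : ∀ v : Fin 3, (v = i ∧ τ v = ja) ∨ (v = j ∧ τ v = jb) ∨
          (v ≠ i ∧ v ≠ j ∧ τ v = jc) := by
        intro v
        by_cases h1 : v = i
        · exact Or.inl ⟨h1, by rw [h1, tvi]⟩
        · by_cases h2 : v = j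
          · exact Or.inr (Or.inl ⟨h2, by rw [h2, tvj]⟩)
          · exact Or.inr (Or.inr ⟨h1, h2, tvk v h1 h2⟩)
      rcases e w with ⟨ew, tw⟩ | ⟨ew, tw⟩ | ⟨ew1, ew2, tw⟩ <;>
        rcases e w' with ⟨ew', tw'⟩ | ⟨ew', tw'⟩ | ⟨ew1', ew2', tw'⟩
      · rw [ew, ew']
      · exact absurd (by rw [← tw, h, tw']) hab
      · exact absurd (by rw [← tw, h, tw']) hac
      · exact absurd (by rw [← tw', ← h, tw]) (Ne.symm hab)
      · rw [ew, ew']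
      · exact absurd (by rw [← tw, h, tw']) hbc
      · exact absurd (by rw [← tw', ← h, tw]) (Ne.symm hac)
      · exact absurd (by rw [← tw', ← h, tw]) (Ne.symm hbc)
      · rw [hwk w ew1 ew2, hwk w' ew1' ew2']
    have hτbij : Function.Bijective τ := (Finite.injective_iff_bijective).mp hτinj
    refine ⟨(fun s => arcP m z (loF p q s) (hiF p q m s)) ∘ τ,
      split_perm (arcP_split hm3 z hpq hqm) τ hτbij, ?_⟩
    intro w
    have hseg : ∀ (u : ZMod m → ℝ) (s : Fin 3),
        bval u (arcP m z (loF p q s) (hiF p q m s)) =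
          seg (fun t => u (z + (t : ZMod m))) (loF p q s) (hiF p q m s) :=
      fun u s => sum_arcP u z (hhile p q (le_trans hpq hqm) hqm s)
    rcases hcov3 i j k w hij (fun hh => hki hh.symm) (fun hh => hkj hh.symm) with hw | hw | hw
    · rw [hw]
      simp only [Function.comp]
      rw [tvi, hseg (us i) ja]
      exact hva
    · rw [hw]
      simp only [Function.comp]
      rw [tvj, hseg (us j) jb]
      exact hvb
    · rw [hw]
      simp only [Function.comp]
      rw [tvk k (fun hh => hki hh) (fun hh => hkj hh), hseg (us k) jc]
      exact hvc

end Main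
end

section
/- Let C be a cycle of goods, u a nonnegative additive utility function on V(C), and n ≥ 2. Then for every vertex x of C, mms^(n-1)(C - x, u) ≥ mms^(n)(C, u), where C - x is the path obtained by deleting x from C. -/
open scoped BigOperators

/-!
Take any split of the cycle into `n` bundles and let `S` be the bundle containing `x`. If `S` is
the whole cycle, some other bundle is empty and there is nothing to prove. Otherwise `S` is an
arc `x + a, …, x + b`; deleting `x` leaves the two sub-arcs on either side of it, and each of them
can be merged into the bundle containing the first vertex beyond its far end. Dropping `S` gives
a split of `C - x` into `n - 1` connected bundles, each containing one of the old bundles, so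
(as `u ≥ 0`) no bundle loses value.
-/

open Finset

section Bundles

open SimpleGraph

variable {V : Type*} {G : SimpleGraph V}

lemma IsBundle.connected_of_mem {S : Finset V} {v : V} (hS : IsBundle G S) (hv : v ∈ S) :
    (G.induce (S : Set V)).Connected :=
  hS.resolve_left fun h => (Set.eq_empty_iff_forall_notMem.1 h v) hv

lemma IsBundle.subset_of_adj_closed {S : Finset V} {F : Set V} {x : V} (hS : IsBundle G S)
    (hx : x ∈ S) (hxF : x ∈ F) (hF : ∀ v ∈ F, ∀ w ∈ S, G.Adj v w → w ∈ F) :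
    (S : Set V) ⊆ F := by
  suffices ∀ w : (S : Set V), Relation.ReflTransGen (G.induce S).Adj ⟨x, hx⟩ w → w.1 ∈ F from
    fun w hw => this ⟨w, hw⟩ <|
      (reachable_iff_reflTransGen _ _).1 <| (hS.connected_of_mem hx).preconnected _ _
  intro w hw
  induction hw with
  | refl => exact hxF
  | tail _ hadj ih => exact hF _ ih _ (Subtype.mem _) hadj

variable [DecidableEq V]

lemma IsBundle.insert_of_adj {S : Finset V} {v w : V} (hS : IsBundle G S) (hw : w ∈ S)
    (hvw : G.Adj v w) : IsBundle G (insert v S) := by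
  have hv : (G.induce ({v} : Set V)).Connected := by
    rw [induce_singleton_eq_top]
    exact connected_top
  right
  rw [coe_insert, Set.insert_eq]
  exact connected_induce_union hv.preconnected (hS.connected_of_mem hw).preconnected rfl hw
    hvw

lemma bval_mono {u : V → ℝ} (hu : ∀ v, 0 ≤ u v) {S T : Finset V} (h : S ⊆ T) :
    bval u S ≤ bval u T :=
  sum_le_sum_of_subset_of_nonneg h fun v _ _ => hu v

lemma mmsOn_nonneg {A : Finset V} {n : ℕ} {u : V → ℝ} (hu : ∀ v, 0 ≤ u v) :
    0 ≤ mmsOn G A n u := by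
  set Q := {q : ℝ | ∃ P : Fin n → Finset V, IsSplitOn G A n P ∧ ∀ i, q ≤ bval u (P i)}
  rcases Q.eq_empty_or_nonempty with hQ | ⟨_, P, hP, _⟩
  · simp only [mmsOn, Q] at hQ ⊢
    rw [hQ, Real.sSup_empty]
  by_cases hbdd : BddAbove Q
  · exact le_csSup hbdd ⟨P, hP, fun i => sum_nonneg fun v _ => hu v⟩
  · exact (Real.sSup_of_not_bddAbove hbdd).ge

lemma le_mmsOn {A : Finset V} {n : ℕ} {u : V → ℝ} (hu : ∀ v, 0 ≤ u v) (hn : n ≠ 0)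
    {P : Fin n → Finset V} (hP : IsSplitOn G A n P) {q : ℝ} (hq : ∀ i, q ≤ bval u (P i)) :
    q ≤ mmsOn G A n u := by
  refine le_csSup ⟨bval u A, ?_⟩ ⟨P, hP, hq⟩
  rintro q' ⟨P', hP', hq'⟩
  exact (hq' ⟨0, Nat.pos_of_ne_zero hn⟩).trans (bval_mono hu (hP'.2.2.1 _))

lemma IsSplitOn.exists_isSplitOn_erase {A : Finset V} {n : ℕ} {P : Fin (n + 1) → Finset V}
    (hP : IsSplitOn G A (n + 1) P) {i₀ : Fin (n + 1)} {x b c : V} {L R : Finset V}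
    (hx : x ∈ P i₀) (hb : b ∈ A \ P i₀) (hc : c ∈ A \ P i₀) (hLR : (P i₀).erase x = L ∪ R)
    (hdisj : Disjoint L R) (hL : ∀ T, IsBundle G T → b ∈ T → IsBundle G (T ∪ L))
    (hR : ∀ T, IsBundle G T → c ∈ T → IsBundle G (T ∪ R)) :
    ∃ Q : Fin n → Finset V, IsSplitOn G (A.erase x) n Q ∧ ∀ j, P (i₀.succAbove j) ⊆ Q j := by
  obtain ⟨hbund, hPdisj, hPsub, hcover⟩ := hP
  rw [mem_sdiff] at hb hc
  obtain ⟨j₁, hbj₁⟩ := hcover b hb.1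
  obtain ⟨j₂, hcj₂⟩ := hcover c hc.1
  have hj₁ : j₁ ≠ i₀ := fun h => hb.2 (h ▸ hbj₁)
  have hj₂ : j₂ ≠ i₀ := fun h => hc.2 (h ▸ hcj₂)
  have hout : ∀ j v, v ∈ P (i₀.succAbove j) → v ∉ L ∪ R := fun j v hv hv' =>
    disjoint_left.1 (hPdisj _ _ (i₀.succAbove_ne j)) hv (mem_of_mem_erase (hLR ▸ hv'))
  set e := i₀.succAbove
  set Q : Fin n → Finset V := fun j =>
    (P (e j) ∪ if e j = j₁ then L else ∅) ∪ if e j = j₂ then R else ∅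
  have hmemQ : ∀ j v, v ∈ Q j ↔
      v ∈ P (e j) ∨ (e j = j₁ ∧ v ∈ L) ∨ (e j = j₂ ∧ v ∈ R) := fun j v => by
    simp only [Q, mem_union, apply_ite (v ∈ ·), notMem_empty, if_false_right, or_assoc]
  refine ⟨Q, ⟨fun j => ?_, fun j j' hjj' => ?_, fun j => ?_, fun v hv => ?_⟩,
    fun j => subset_union_left.trans subset_union_left⟩
  · have hPL : IsBundle G (P (e j) ∪ if e j = j₁ then L else ∅) := by
      split_ifs with h
      · exact hL _ (hbund _) (h ▸ hbj₁)
      · simpa using hbund (e j)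
    by_cases h : e j = j₂
    · simpa only [Q, if_pos h] using hR _ hPL (mem_union_left _ (h ▸ hcj₂))
    · simpa only [Q, if_neg h, union_empty] using hPL
  · have he : e j ≠ e j' := i₀.succAbove_right_injective.ne hjj'
    refine disjoint_left.2 fun v hv hv' => ?_
    have := hout j v
    have := hout j' v
    have : v ∈ L → v ∉ R := fun h => disjoint_left.1 hdisj h
    have : v ∈ P (e j) → v ∉ P (e j') := fun h => disjoint_left.1 (hPdisj _ _ he) h
    grind
  · intro v hv
    have hLR_sub : L ∪ R ⊆ A.erase x := hLR ▸ erase_subset_erase x (hPsub i₀)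
    rcases (hmemQ j v).1 hv with h | ⟨-, h⟩ | ⟨-, h⟩
    · refine mem_erase.2 ⟨fun hvx => ?_, hPsub _ h⟩
      exact disjoint_left.1 (hPdisj _ _ (i₀.succAbove_ne j)) h (hvx ▸ hx)
    all_goals exact hLR_sub (by simp [h])
  · obtain ⟨k, hk⟩ := hcover v (mem_of_mem_erase hv)
    by_cases hki₀ : k = i₀
    · subst hki₀
      rcases mem_union.1 (hLR ▸ mem_erase.2 ⟨ne_of_mem_erase hv, hk⟩) with h | h
      · obtain ⟨j, hj⟩ := Fin.exists_succAbove_eq hj₁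
        exact ⟨j, (hmemQ j v).2 (Or.inr (Or.inl ⟨hj, h⟩))⟩
      · obtain ⟨j, hj⟩ := Fin.exists_succAbove_eq hj₂
        exact ⟨j, (hmemQ j v).2 (Or.inr (Or.inr ⟨hj, h⟩))⟩
    · obtain ⟨j, rfl⟩ := Fin.exists_succAbove_eq hki₀
      exact ⟨j, (hmemQ j v).2 (Or.inl hk)⟩

end Bundles

section Cycle

variable {m : ℕ}

noncomputable def arc (x : ZMod m) (a b : ℤ) : Finset (ZMod m) :=
  (Icc a b).image fun k : ℤ => x + (k : ZMod m)

lemma mem_arc {x v : ZMod m} {a b : ℤ} : v ∈ arc x a b ↔ ∃ k, a ≤ k ∧ k ≤ b ∧ x + k = v := by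
  simp [arc, and_assoc]

lemma cycleGraph_adj {v w : ZMod m} :
    (cycleGraph m).Adj v w ↔ v ≠ w ∧ (w = v + 1 ∨ v = w + 1) :=
  SimpleGraph.fromRel_adj _ _ _

lemma cycleGraph_adj_add_one [Nontrivial (ZMod m)] (v : ZMod m) :
    (cycleGraph m).Adj v (v + 1) :=
  cycleGraph_adj.2 ⟨by simp, Or.inl rfl⟩

lemma IsBundle.union_arc_of_sub_one_mem [Nontrivial (ZMod m)] {T : Finset (ZMod m)}
    {x : ZMod m} {a : ℤ} (hT : IsBundle (cycleGraph m) T) (ha : x + ((a - 1 : ℤ) : ZMod m) ∈ T)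
    (b : ℤ) : IsBundle (cycleGraph m) (T ∪ arc x a b) := by
  rcases lt_or_ge b (a - 1) with hb | hb
  · rwa [arc, Icc_eq_empty (by omega), image_empty, union_empty]
  induction b, hb using Int.leInduction with
  | base => rwa [arc, Icc_eq_empty (by omega), image_empty, union_empty]
  | succ b hb ih =>
    rw [arc, ← insert_Icc_right_eq_Icc_add_one (by omega), image_insert, union_insert]
    refine ih.insert_of_adj (w := x + (b : ZMod m)) ?_ ?_
    · rcases hb.eq_or_lt with rfl | hb
      · exact mem_union_left _ ha
      · exact mem_union_right _ (mem_arc.2 ⟨b, by omega, le_rfl, rfl⟩)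
    · convert (cycleGraph_adj_add_one (x + (b : ZMod m))).symm using 1
      push_cast; ring

lemma IsBundle.union_arc_of_add_one_mem [Nontrivial (ZMod m)] {T : Finset (ZMod m)}
    {x : ZMod m} {b : ℤ} (hT : IsBundle (cycleGraph m) T) (hb : x + ((b + 1 : ℤ) : ZMod m) ∈ T)
    (a : ℤ) : IsBundle (cycleGraph m) (T ∪ arc x a b) := by
  rcases lt_or_ge (b + 1) a with ha | ha
  · rwa [arc, Icc_eq_empty (by omega), image_empty, union_empty]
  induction a, ha using Int.leInductionDown with
  | base => rwa [arc, Icc_eq_empty (by omega), image_empty, union_empty]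
  | pred a ha ih =>
    rw [arc, ← insert_Icc_left_eq_Icc_sub_one (by omega), image_insert, union_insert]
    refine ih.insert_of_adj (w := x + (a : ZMod m)) ?_ ?_
    · rcases ha.eq_or_lt with rfl | ha
      · exact mem_union_left _ hb
      · exact mem_union_right _ (mem_arc.2 ⟨a, le_rfl, by omega, rfl⟩)
    · convert cycleGraph_adj_add_one (x + ((a - 1 : ℤ) : ZMod m)) using 1
      push_cast; ring

lemma eq_of_intCast_eq_of_abs_sub_lt {k l : ℤ} (h : (k : ZMod m) = l) (hkl : |k - l| < m) :
    k = l :=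
  sub_eq_zero.1 <|
    Int.eq_zero_of_abs_lt_dvd ((ZMod.intCast_eq_intCast_iff_dvd_sub l k m).1 h.symm) hkl

lemma IsBundle.subset_arc {S : Finset (ZMod m)} {x : ZMod m} {a b : ℤ}
    (hS : IsBundle (cycleGraph m) S) (hx : x ∈ S) (ha : a ≤ 0) (hb : 0 ≤ b)
    (ha' : x + ((a - 1 : ℤ) : ZMod m) ∉ S) (hb' : x + ((b + 1 : ℤ) : ZMod m) ∉ S) :
    S ⊆ arc x a b := by
  refine coe_subset.1 <| hS.subset_of_adj_closed hx (mem_arc.2 ⟨0, ha, hb, by simp⟩) ?_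
  intro v hv w hw hvw
  obtain ⟨k, hak, hkb, rfl⟩ := mem_arc.1 hv
  rcases (cycleGraph_adj.1 hvw).2 with rfl | h
  · have hk : k + 1 ≤ b := by
      by_contra!
      obtain rfl : k = b := by omega
      exact hb' (by push_cast; rwa [← add_assoc])
    exact mem_arc.2 ⟨k + 1, by omega, hk, by push_cast; ring⟩
  · obtain rfl : w = x + ((k - 1 : ℤ) : ZMod m) := by push_cast; linear_combination -h
    have hk : a ≤ k - 1 := by
      by_contra!
      obtain rfl : k = a := by omega
      exact ha' hw
    exact mem_arc.2 ⟨k - 1, hk, by omega, rfl⟩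

lemma IsBundle.exists_eq_arc [NeZero m] {S : Finset (ZMod m)} {x : ZMod m}
    (hS : IsBundle (cycleGraph m) S) (hx : x ∈ S) (hSu : S ≠ univ) :
    ∃ a b : ℤ, a ≤ 0 ∧ 0 ≤ b ∧ b - a < m ∧ S = arc x a b ∧
      x + ((a - 1 : ℤ) : ZMod m) ∉ S ∧ x + ((b + 1 : ℤ) : ZMod m) ∉ S := by
  -- a vertex `z ∉ S` bounds both runs of `S` out of `x`, so the arc is shorter than the cycle
  obtain ⟨z, hz⟩ : ∃ z, z ∉ S := by simpa [eq_univ_iff_forall] using hSu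
  set d := (z - x).val
  have hd0 : d ≠ 0 := by
    rw [Ne, ZMod.val_eq_zero, sub_eq_zero]
    exact fun h => hz (h ▸ hx)
  have hdm : d < m := ZMod.val_lt _
  have hdz : x + ((d : ℤ) : ZMod m) = z := by
    rw [Int.cast_natCast, ZMod.natCast_zmod_val]
    ring
  have hz_up : x + (((d - 1 : ℕ) + 1 : ℤ) : ZMod m) ∉ S := by
    rwa [show ((d - 1 : ℕ) : ℤ) + 1 = d by omega, hdz]
  have hz_down : x + ((-(m - d - 1 : ℕ) - 1 : ℤ) : ZMod m) ∉ S := by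
    rwa [show -((m - d - 1 : ℕ) : ℤ) - 1 = d - m by omega, Int.cast_sub, Int.cast_natCast m,
      ZMod.natCast_self, sub_zero, hdz]
  have hup : ∃ k : ℕ, x + ((k + 1 : ℤ) : ZMod m) ∉ S := ⟨_, hz_up⟩
  have hdown : ∃ k : ℕ, x + ((-k - 1 : ℤ) : ZMod m) ∉ S := ⟨_, hz_down⟩
  have hup_le : Nat.find hup ≤ d - 1 := Nat.find_min' hup hz_up
  have hdown_le : Nat.find hdown ≤ m - d - 1 := Nat.find_min' hdown hz_down
  have harc : arc x (-Nat.find hdown) (Nat.find hup) ⊆ S := by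
    intro v hv
    obtain ⟨k, hak, hkb, rfl⟩ := mem_arc.1 hv
    rcases lt_trichotomy k 0 with hk | rfl | hk
    · obtain ⟨j, rfl⟩ : ∃ j : ℕ, k = -j - 1 := ⟨(-k - 1).toNat, by omega⟩
      simpa using Nat.find_min hdown (show j < Nat.find hdown by omega)
    · simpa using hx
    · obtain ⟨j, rfl⟩ : ∃ j : ℕ, k = j + 1 := ⟨(k - 1).toNat, by omega⟩
      simpa using Nat.find_min hup (show j < Nat.find hup by omega)
  refine ⟨_, _, by omega, by omega, by omega, ?_, Nat.find_spec hdown, Nat.find_spec hup⟩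
  exact (hS.subset_arc hx (by omega) (by omega) (Nat.find_spec hdown)
    (Nat.find_spec hup)).antisymm harc

lemma arc_erase_eq_union (x : ZMod m) {a b : ℤ} (ha : a ≤ 0) (hb : 0 ≤ b) (hab : b - a < m) :
    (arc x a b).erase x = arc x 1 b ∪ arc x a (-1) := by
  have hne : ∀ k : ℤ, a ≤ k → k ≤ b → x + (k : ZMod m) = x → k = 0 := fun k hak hkb h =>
    eq_of_intCast_eq_of_abs_sub_lt (by simpa using h) (by rw [abs_lt]; omega)
  ext v
  simp only [mem_erase, mem_union, mem_arc]
  constructor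
  · rintro ⟨hvx, k, hak, hkb, rfl⟩
    rcases lt_trichotomy k 0 with hk | rfl | hk
    · exact Or.inr ⟨k, hak, by omega, rfl⟩
    · simp at hvx
    · exact Or.inl ⟨k, by omega, hkb, rfl⟩
  · rintro (⟨k, hak, hkb, rfl⟩ | ⟨k, hak, hkb, rfl⟩)
    · exact ⟨fun h => by have := hne k (by omega) hkb h; omega, k, by omega, hkb, rfl⟩
    · exact ⟨fun h => by have := hne k hak (by omega) h; omega, k, hak, by omega, rfl⟩

lemma disjoint_arc_pos_arc_neg (x : ZMod m) {a b : ℤ} (hab : b - a < m) :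
    Disjoint (arc x 1 b) (arc x a (-1)) := by
  refine disjoint_left.2 fun v hv hv' => ?_
  obtain ⟨k, hk₁, hkb, rfl⟩ := mem_arc.1 hv
  obtain ⟨l, hal, hl₁, hl⟩ := mem_arc.1 hv'
  have := eq_of_intCast_eq_of_abs_sub_lt (add_left_cancel hl) (by rw [abs_lt]; omega)
  omega

end Cycle

lemma le_mmsOn_erase_of_isSplitOn {m n : ℕ} [NeZero m] [Nontrivial (ZMod m)] (hn : n ≠ 0)
    {u : ZMod m → ℝ} (hu : ∀ v, 0 ≤ u v) {P : Fin (n + 1) → Finset (ZMod m)}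
    (hP : IsSplitOn (cycleGraph m) univ (n + 1) P) {q : ℝ} (hq : ∀ i, q ≤ bval u (P i))
    (x : ZMod m) : q ≤ mmsOn (cycleGraph m) (univ.erase x) n u := by
  obtain ⟨i₀, hx⟩ := hP.2.2.2 x (mem_univ x)
  by_cases hS : P i₀ = univ
  · have : Nontrivial (Fin (n + 1)) := Fin.nontrivial_iff_two_le.2 (by omega)
    obtain ⟨i₁, hi₁⟩ := exists_ne i₀
    have hP₁ : P i₁ = ∅ := by simpa [hS, ← top_eq_univ] using hP.2.1 i₁ i₀ hi₁
    calc q ≤ bval u (P i₁) := hq i₁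
      _ = 0 := by rw [hP₁, bval, sum_empty]
      _ ≤ _ := mmsOn_nonneg hu
  obtain ⟨a, b, ha, hb, hab, hSeq, ha', hb'⟩ := (hP.1 i₀).exists_eq_arc hx hS
  obtain ⟨Q, hQ, hPQ⟩ := hP.exists_isSplitOn_erase hx (by simpa using hb') (by simpa using ha')
    (hSeq ▸ arc_erase_eq_union x ha hb hab) (disjoint_arc_pos_arc_neg x hab)
    (fun T hT h => hT.union_arc_of_add_one_mem h 1)
    (fun T hT h => hT.union_arc_of_sub_one_mem h (-1))
  exact le_mmsOn hu hn hQ fun j => (hq _).trans (bval_mono hu (hPQ j))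

/-- deleting a vertex from a cycle does not decrease the maximin share
when the number of agents also drops by one. -/
theorem stmt4 (m n : ℕ) [NeZero m] (hm : 3 ≤ m) (hn : 2 ≤ n)
    (u : ZMod m → ℝ) (hu : ∀ v, 0 ≤ u v) (x : ZMod m) :
    mms (cycleGraph m) n u ≤
      mmsOn (cycleGraph m) (Finset.univ.erase x) (n - 1) u := by
  have : Nontrivial (ZMod m) := ZMod.nontrivial_iff.2 (by omega)
  obtain ⟨k, rfl⟩ : ∃ k, n = k + 2 := ⟨n - 2, by omega⟩
  refine Real.sSup_le ?_ (mmsOn_nonneg hu)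
  rintro q ⟨P, hP, hq⟩
  exact le_mmsOn_erase_of_isSplitOn k.succ_ne_zero hu hP hq x
end
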